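/- Let A be an irreducible central hyperplane arrangement in K^ℓ. Then the degree-1 graded piece of D(A) is spanned over K by the Euler derivation θ_E = Σ_{i=1}^ℓ x_i ∂_{x_i}; i.e., every derivation θ ∈ D(A) with linear coefficient functions is a scalar multiple of θ_E. -/

import Mathlib

open scoped Classical
open MvPolynomial

namespace ArrPaper

variable {K : Type*} [Field K] {ℓ : ℕ}

/-- The coordinate ring `S = K[x₁,…,x_ℓ]`. -/
noncomputable abbrev S (K : Type*) [Field K] (ℓ : ℕ) := MvPolynomial (Fin ℓ) K

/-- The linear form associated to a covector `c`. -/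
noncomputable def linForm (c : Fin ℓ → K) : S K ℓ :=
  ∑ i, MvPolynomial.C (c i) * MvPolynomial.X i

/-- The linear functional associated to a covector. -/
noncomputable def toFunc (c : Fin ℓ → K) : (Fin ℓ → K) →ₗ[K] K :=
  ∑ i, c i • LinearMap.proj i

/-- A (central) hyperplane arrangement, given by a finite set of nonzero,
pairwise non-proportional covectors (defining linear forms). -/
structure Arrangement (K : Type*) [Field K] (ℓ : ℕ) where
  hyps : Finset (Fin ℓ → K)
  ne_zero : ∀ c ∈ hyps, c ≠ 0
  nonparallel : ∀ c ∈ hyps, ∀ c' ∈ hyps, c ≠ c' → ∀ t : K, c' ≠ t • c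

/-- Derivations of the polynomial ring `S`. -/
abbrev Der (K : Type*) [Field K] (ℓ : ℕ) := Derivation K (S K ℓ) (S K ℓ)

/-- `θ` is a logarithmic derivation of the multiarrangement `(A, m)`, i.e.
`θ(α_H) ∈ α_H^{m(H)}·S` for all `H ∈ A`. -/
def IsLogDer (A : Arrangement K ℓ) (m : (Fin ℓ → K) → ℕ) (θ : Der K ℓ) : Prop :=
  ∀ c ∈ A.hyps, (linForm c) ^ (m c) ∣ θ (linForm c)

/-- `θ` is homogeneous of polynomial degree `d`: `θ(α)` is homogeneous of degree `d`
for every linear form `α`. -/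
def IsHomogOfDeg (θ : Der K ℓ) (d : ℕ) : Prop :=
  ∀ c : Fin ℓ → K, (θ (linForm c)).IsHomogeneous d

/-- `θ₁, …, θ_ℓ` form a basis of the `S`-module `D(A,m)`. -/
def IsDerBasis (A : Arrangement K ℓ) (m : (Fin ℓ → K) → ℕ) (θ : Fin ℓ → Der K ℓ) : Prop :=
  (∀ i, IsLogDer A m (θ i)) ∧
  ∀ η : Der K ℓ, IsLogDer A m η → ∃! f : Fin ℓ → S K ℓ, η = ∑ i, f i • θ i

/-- `(A,m)` is free with a homogeneous basis of degrees (exponents) `d`. -/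
def IsFreeWithExp (A : Arrangement K ℓ) (m : (Fin ℓ → K) → ℕ) (d : Fin ℓ → ℕ) : Prop :=
  ∃ θ : Fin ℓ → Der K ℓ, (∀ i, IsHomogOfDeg (θ i) (d i)) ∧ IsDerBasis A m θ

/-- `(A,m)` is a free multiarrangement. -/
def IsFree (A : Arrangement K ℓ) (m : (Fin ℓ → K) → ℕ) : Prop :=
  ∃ d : Fin ℓ → ℕ, IsFreeWithExp A m d

/-- `|m|`, the total multiplicity. -/
def msum (A : Arrangement K ℓ) (m : (Fin ℓ → K) → ℕ) : ℕ := ∑ c ∈ A.hyps, m c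

/-- The rank of an arrangement: the dimension of the span of its covectors. -/
noncomputable def rank (A : Arrangement K ℓ) : ℕ :=
  Module.finrank K (Submodule.span K (A.hyps : Set (Fin ℓ → K)))

/-- `A` is reducible: after a linear change of coordinates it is a product of two
arrangements in complementary (nonzero) subspaces.  In terms of covectors: the
covectors split between two complementary nonzero subspaces of the dual space. -/
def Reducible (A : Arrangement K ℓ) : Prop :=
  ∃ W₁ W₂ : Submodule K (Fin ℓ → K), W₁ ≠ ⊥ ∧ W₂ ≠ ⊥ ∧ W₁ ⊓ W₂ = ⊥ ∧ W₁ ⊔ W₂ = ⊤ ∧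
    ∀ c ∈ A.hyps, c ∈ W₁ ∨ c ∈ W₂

/-- The hyperplanes of the localization at a flat; the flat of codimension `r` is
encoded by the `r`-dimensional subspace `U` of the dual space spanned by the
covectors of the hyperplanes containing it. -/
noncomputable def locHyps (A : Arrangement K ℓ) (U : Submodule K (Fin ℓ → K)) :
    Finset (Fin ℓ → K) :=
  A.hyps.filter (· ∈ U)

/-- `U` encodes a flat of `A` of codimension `r` (an element of `L_r(A)`). -/
def IsFlatOfRank (A : Arrangement K ℓ) (U : Submodule K (Fin ℓ → K)) (r : ℕ) : Prop :=
  Module.finrank K U = r ∧ Submodule.span K (locHyps A U : Set (Fin ℓ → K)) = U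

/-- The localization `A_X` of `A` at the flat encoded by `U`. -/
noncomputable def localize (A : Arrangement K ℓ) (U : Submodule K (Fin ℓ → K)) :
    Arrangement K ℓ where
  hyps := locHyps A U
  ne_zero := fun c hc => A.ne_zero c (Finset.mem_filter.mp hc).1
  nonparallel := fun c hc c' hc' =>
    A.nonparallel c (Finset.mem_filter.mp hc).1 c' (Finset.mem_filter.mp hc').1

/-- `H₀` (given by covector `c₀`) is a heavy hyperplane of `(A,m)`. -/
def IsHeavy (A : Arrangement K ℓ) (m : (Fin ℓ → K) → ℕ) (c₀ : Fin ℓ → K) : Prop :=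
  c₀ ∈ A.hyps ∧ (∑ c ∈ A.hyps.erase c₀, m c) ≤ m c₀

/-- `H₀` (given by covector `c₀`) is a locally heavy hyperplane of `(A,m)`. -/
def IsLocallyHeavy (A : Arrangement K ℓ) (m : (Fin ℓ → K) → ℕ) (c₀ : Fin ℓ → K) : Prop :=
  c₀ ∈ A.hyps ∧ ∀ U : Submodule K (Fin ℓ → K), IsFlatOfRank A U 2 → c₀ ∈ U →
    3 ≤ (locHyps A U).card → (∑ c ∈ (locHyps A U).erase c₀, m c) ≤ m c₀

/-- `b` is the second Betti number of the rank-2 localization of `(A,m)` at `U`: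
the product of the nonzero exponents of this free rank-2 multiarrangement. -/
def IsLocalB2 (A : Arrangement K ℓ) (m : (Fin ℓ → K) → ℕ)
    (U : Submodule K (Fin ℓ → K)) (b : ℕ) : Prop :=
  ∃ d : Fin ℓ → ℕ, IsFreeWithExp (localize A U) m d ∧
    b = ∏ i ∈ Finset.univ.filter (fun i => d i ≠ 0), d i

/-- `b` is the second Betti number `b₂(A,m)` of the multiarrangement `(A,m)`. -/
def IsB2 (A : Arrangement K ℓ) (m : (Fin ℓ → K) → ℕ) (b : ℕ) : Prop :=
  ∃ bloc : Submodule K (Fin ℓ → K) → ℕ,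
    (∀ U, IsFlatOfRank A U 2 → IsLocalB2 A m U (bloc U)) ∧
    b = ∑ᶠ U ∈ {U : Submodule K (Fin ℓ → K) | IsFlatOfRank A U 2}, bloc U

/-- The second Betti number of a simple arrangement:
`b₂(A) = Σ_{X ∈ L₂(A)} (|A_X| - 1)`. -/
noncomputable def b2Simple (A : Arrangement K ℓ) : ℕ :=
  ∑ᶠ U ∈ {U : Submodule K (Fin ℓ → K) | IsFlatOfRank A U 2}, ((locHyps A U).card - 1)

/-- The Euler–Ziegler multiplicity of the restricted hyperplane `H₀ ∩ ker(c)` of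
`A^{H₀}`: `m^{H₀}(X) = |m_X| - m(H₀)`. -/
noncomputable def EZmult (A : Arrangement K ℓ) (m : (Fin ℓ → K) → ℕ)
    (c₀ c : Fin ℓ → K) : ℕ :=
  (∑ c' ∈ A.hyps.filter (· ∈ Submodule.span K ({c₀, c} : Set (Fin ℓ → K))), m c') - m c₀

/-- Two covectors are parallel (define the same hyperplane). -/
def Parallel {n : ℕ} (b b' : Fin n → K) : Prop := ∃ t : K, t ≠ 0 ∧ b' = t • b

/-- The covector on `K^n` obtained by restricting the covector `c` on `K^{n+1}` to the
hyperplane `ker c₀`, transported by the linear isomorphism `e : ker c₀ ≃ K^n`. -/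
noncomputable def resCov {n : ℕ} (c₀ : Fin (n+1) → K)
    (e : ↥(LinearMap.ker (toFunc c₀)) ≃ₗ[K] (Fin n → K)) (c : Fin (n+1) → K) :
    Fin n → K :=
  fun j => toFunc c ((e.symm (Pi.single j 1) : ↥(LinearMap.ker (toFunc c₀))) : Fin (n+1) → K)

/-- `(B, mB)` is (a model, in coordinates, of) the Euler–Ziegler restriction
`(A^{H₀}, m^{H₀})` of `(A,m)` to the hyperplane `H₀ = ker c₀ ∈ A`. -/
def IsEZRes {n : ℕ} (A : Arrangement K (n+1)) (m : (Fin (n+1) → K) → ℕ)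
    (c₀ : Fin (n+1) → K) (B : Arrangement K n) (mB : (Fin n → K) → ℕ) : Prop :=
  c₀ ∈ A.hyps ∧
  ∃ e : ↥(LinearMap.ker (toFunc c₀)) ≃ₗ[K] (Fin n → K),
    (∀ c ∈ A.hyps.erase c₀, ∃ b ∈ B.hyps,
        Parallel b (resCov c₀ e c) ∧ mB b = EZmult A m c₀ c) ∧
    (∀ b ∈ B.hyps, ∃ c ∈ A.hyps.erase c₀, Parallel b (resCov c₀ e c))

/-- A combinatorial equivalence between two arrangements: a bijection between the
hyperplanes inducing an isomorphism of intersection lattices (it preserves the rank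
of every subset of hyperplanes). -/
def CombEquiv (A A' : Arrangement K ℓ) : Prop :=
  ∃ φ : (Fin ℓ → K) → (Fin ℓ → K), Set.BijOn φ ↑A.hyps ↑A'.hyps ∧
    ∀ T : Finset (Fin ℓ → K), T ⊆ A.hyps →
      Module.finrank K (Submodule.span K (T : Set (Fin ℓ → K))) =
      Module.finrank K (Submodule.span K ((T.image φ) : Set (Fin ℓ → K)))

/-- The Euler derivation `θ_E = Σ xᵢ ∂_{xᵢ}`. -/
noncomputable def eulerDer (K : Type*) [Field K] (ℓ : ℕ) : Der K ℓ :=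
  MvPolynomial.mkDerivation K (fun i => (MvPolynomial.X i : S K ℓ))

/-!
A derivation `θ` of degree one maps linear forms to linear forms, through a linear map `T` on
covectors, and `α_H ∣ θ(α_H)` says that every covector of `A` is an eigenvector of `T`.
Eigenspaces of distinct eigenvalues are independent, so the eigenspace of one eigenvalue `τ` and
the sum of the others split the covectors of `A`; irreducibility kills the second summand, so
`T = τ • id` and `θ = τ θ_E`. If the covectors do not span, irreducibility forces `ℓ ≤ 1`,
where every `T` is a scalar.
-/

section Indecomposable

variable (K) {V : Type*} [AddCommGroup V] [Module K V]

def IsIndecomposable (s : Set V) : Prop :=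
  ∀ W₁ W₂ : Submodule K V, IsCompl W₁ W₂ → s ⊆ W₁ ∪ W₂ → W₁ = ⊥ ∨ W₂ = ⊥

variable {K}

theorem IsIndecomposable.span_eq_top {s : Set V} (hs : IsIndecomposable K s) {c : V}
    (hc : c ∈ s) (hc0 : c ≠ 0) : Submodule.span K s = ⊤ := by
  obtain ⟨W, hW⟩ := (Submodule.span K s).exists_isCompl
  rcases hs _ W hW fun x hx => Or.inl (Submodule.subset_span hx) with hbot | hbot
  · have : c ∈ (⊥ : Submodule K V) := hbot ▸ Submodule.subset_span hc
    exact absurd ((Submodule.mem_bot K).mp this) hc0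
  · exact eq_top_of_isCompl_bot (hbot ▸ hW)

theorem IsIndecomposable.exists_forall_eq_smul_of_mem {s : Set V} (hs : IsIndecomposable K s)
    (T : Module.End K V) (heig : ∀ c ∈ s, ∃ μ : K, T c = μ • c) {c : V} (hc : c ∈ s)
    (hc0 : c ≠ 0) : ∃ τ : K, ∀ v, T v = τ • v := by
  obtain ⟨τ, hτ⟩ := heig c hc
  set W := ⨆ (μ : K) (_ : μ ≠ τ), T.eigenspace μ
  have hcover : s ⊆ T.eigenspace τ ∪ W := by
    intro x hx
    obtain ⟨μ, hμ⟩ := heig x hx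
    have hxμ : x ∈ T.eigenspace μ := Module.End.mem_eigenspace_iff.mpr hμ
    by_cases h : μ = τ
    · exact Or.inl (h ▸ hxμ)
    · exact Or.inr (Submodule.mem_iSup_of_mem μ (Submodule.mem_iSup_of_mem h hxμ))
  have htop : T.eigenspace τ ⊔ W = ⊤ := by
    rw [eq_top_iff, ← hs.span_eq_top hc hc0, Submodule.span_le]
    exact hcover.trans
      (Set.union_subset (SetLike.coe_mono le_sup_left) (SetLike.coe_mono le_sup_right))
  have hcompl : IsCompl (T.eigenspace τ) W :=
    ⟨T.eigenspaces_iSupIndep τ, codisjoint_iff.mpr htop⟩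
  rcases hs _ _ hcompl hcover with hbot | hbot
  · have : c ∈ (⊥ : Submodule K V) := hbot ▸ Module.End.mem_eigenspace_iff.mpr hτ
    exact absurd ((Submodule.mem_bot K).mp this) hc0
  · have hτ_top := eq_top_of_isCompl_bot (hbot ▸ hcompl)
    exact ⟨τ, fun v => Module.End.mem_eigenspace_iff.mp (hτ_top ▸ Submodule.mem_top)⟩

theorem IsIndecomposable.exists_forall_eq_smul {s : Set V} (hs : IsIndecomposable K s)
    (T : Module.End K V) (heig : ∀ c ∈ s, ∃ μ : K, T c = μ • c) :
    ∃ τ : K, ∀ v, T v = τ • v := by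
  by_cases hs0 : ∃ c ∈ s, c ≠ 0
  · obtain ⟨c, hc, hc0⟩ := hs0
    exact hs.exists_forall_eq_smul_of_mem T heig hc hc0
  push Not at hs0
  by_cases hV : ∃ v : V, v ≠ 0
  · obtain ⟨v, hv⟩ := hV
    have hsv : IsIndecomposable K {v} := fun W₁ W₂ hW _ =>
      hs W₁ W₂ hW fun c hc => Or.inl (hs0 c hc ▸ W₁.zero_mem)
    have hTv : T v ∈ Submodule.span K {v} := hsv.span_eq_top rfl hv ▸ Submodule.mem_top
    obtain ⟨μ, hμ⟩ := Submodule.mem_span_singleton.mp hTv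
    exact hsv.exists_forall_eq_smul_of_mem T
      (by rintro _ rfl; exact ⟨μ, hμ.symm⟩) rfl hv
  · push Not at hV
    exact ⟨0, fun v => by simp [hV]⟩

end Indecomposable

theorem not_reducible_iff {A : Arrangement K ℓ} :
    ¬ Reducible A ↔ IsIndecomposable K (A.hyps : Set (Fin ℓ → K)) := by
  simp only [Reducible, IsIndecomposable, isCompl_iff, disjoint_iff, codisjoint_iff,
    Set.subset_def, Set.mem_union, SetLike.mem_coe]
  grind

theorem linForm_eq_linearCombination (c : Fin ℓ → K) :
    linForm c = Fintype.linearCombination K (X : Fin ℓ → S K ℓ) c := by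
  simp [linForm, Fintype.linearCombination_apply, smul_eq_C_mul]

theorem linForm_single (i : Fin ℓ) : linForm (Pi.single i (1 : K)) = X i := by
  rw [linForm_eq_linearCombination, Fintype.linearCombination_apply_single, one_smul]

theorem linForm_smul (t : K) (c : Fin ℓ → K) : linForm (t • c) = t • linForm c := by
  simp only [linForm_eq_linearCombination, map_smul]

theorem coeff_linForm (c : Fin ℓ → K) (j : Fin ℓ) :
    (linForm c).coeff (Finsupp.single j 1) = c j := by
  simp [linForm, coeff_sum, coeff_C_mul, coeff_X, Finsupp.single_left_inj]

theorem coeff_zero_linForm (c : Fin ℓ → K) : (linForm c).coeff 0 = 0 := by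
  simp [linForm, coeff_sum, coeff_C_mul, coeff_X]

theorem exists_linForm_eq_of_isHomogeneous_one {p : S K ℓ} (hp : p.IsHomogeneous 1) :
    ∃ c, linForm c = p := by
  have hp' : p ∈ homogeneousSubmodule (Fin ℓ) K 1 := hp
  rw [homogeneousSubmodule_one_eq_span_X, Submodule.mem_span_range_iff_exists_fun] at hp'
  obtain ⟨c, hc⟩ := hp'
  exact ⟨c, by rw [linForm_eq_linearCombination, Fintype.linearCombination_apply, hc]⟩

theorem coeff_single_one_mul {σ R : Type*} [CommSemiring R]
    (p q : MvPolynomial σ R) (j : σ) :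
    (p * q).coeff (Finsupp.single j 1) =
      p.coeff 0 * q.coeff (Finsupp.single j 1) + p.coeff (Finsupp.single j 1) * q.coeff 0 := by
  rw [coeff_mul, Finsupp.antidiagonal_single]
  simp [Finset.Nat.antidiagonal_succ]

theorem exists_eq_smul_of_linForm_dvd {c d : Fin ℓ → K} (h : linForm c ∣ linForm d) :
    ∃ t : K, d = t • c := by
  obtain ⟨q, hq⟩ := h
  refine ⟨q.coeff 0, funext fun j => ?_⟩
  have hj := congrArg (coeff (Finsupp.single j 1)) hq
  rw [coeff_linForm, coeff_single_one_mul, coeff_zero_linForm, coeff_linForm] at hj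
  simp [hj, mul_comm]

noncomputable def onLinForms (θ : Der K ℓ) : Module.End K (Fin ℓ → K) :=
  (LinearMap.pi fun j => lcoeff K (Finsupp.single j 1)) ∘ₗ θ.toLinearMap ∘ₗ
    Fintype.linearCombination K X

theorem linForm_onLinForms {θ : Der K ℓ} (hθ : IsHomogOfDeg θ 1) (c : Fin ℓ → K) :
    linForm (onLinForms θ c) = θ (linForm c) := by
  obtain ⟨d, hd⟩ := exists_linForm_eq_of_isHomogeneous_one (hθ c)
  have : onLinForms θ c = d := funext fun j => by
    simp [onLinForms, ← linForm_eq_linearCombination, ← hd, coeff_linForm]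
  rw [this, hd]

theorem stmt2 (A : Arrangement K ℓ) (hA : ¬ Reducible A) :
    ∀ θ : Der K ℓ, IsLogDer A (fun _ => 1) θ → IsHomogOfDeg θ 1 →
      ∃ t : K, θ = MvPolynomial.C (σ := Fin ℓ) t • eulerDer K ℓ := by
  intro θ hlog hhom
  have heig : ∀ c ∈ A.hyps, ∃ μ : K, onLinForms θ c = μ • c := fun c hc =>
    exists_eq_smul_of_linForm_dvd (by simpa [linForm_onLinForms hhom] using hlog c hc)
  obtain ⟨τ, hτ⟩ := (not_reducible_iff.mp hA).exists_forall_eq_smul _ heig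
  refine ⟨τ, MvPolynomial.derivation_ext fun i => ?_⟩
  calc θ (X i) = θ (linForm (Pi.single i 1)) := by rw [linForm_single]
    _ = τ • X i := by rw [← linForm_onLinForms hhom, hτ, linForm_smul, linForm_single]
    _ = (C τ • eulerDer K ℓ) (X i) := by simp [eulerDer, mkDerivation_X, smul_eq_C_mul]

end ArrPaper
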